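/- arXiv:math/0409448 — 2 statements merged into one kernel-verified Lean document; each statement's English description precedes it below -/
import Mathlib

section
/- Given constants C₁, C₂, C₃ > 0, ε ∈ (0,1), and a > 0 satisfying 2a·C₁C₂C₃·(1 + a·C₁C₂C₃/(1-ε)) ≤ ε, if a sequence (φₙ) in a normed space satisfies ‖φ₁‖ ≤ a·C₃ and ‖φ_{k+1} - φ_k‖ ≤ C₁C₂·(‖φ_k‖ + ‖φ_{k-1}‖)·‖φ_k - φ_{k-1}‖ for all k ≥ 1, then ‖φₙ‖ ≤ a·C₃·(1 + a·C₁C₂C₃/(1-ε)) for all n ≥ 1 and ‖φ_{k+1} - φ_k‖ ≤ ε·‖φ_k - φ_{k-1}‖ for all k ≥ 1; in particular (φₙ) is a Cauchy sequence. -/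
/-!
Write `c = C₁C₂`, `M = aC₃` and `B = M + cM²/(1 - ε)`, so that the smallness assumption reads
`2cB ≤ ε`. As long as two consecutive terms have norm at most `B`, the quadratic recurrence makes
the next increment at most `ε` times the previous one. The increments are therefore bounded by
`M, cM², cM²ε, cM²ε², …`, whose partial sums stay below `B`, and an induction carries both
bounds along. Geometric decay of the increments then makes the sequence Cauchy.
-/

open Finset

section QuadraticIncrements

variable {E : Type*} [SeminormedAddCommGroup E]

def HasQuadraticIncrements (c : ℝ) (φ : ℕ → E) : Prop :=
  ∀ k ≥ 1, ‖φ (k + 1) - φ k‖ ≤ c * (‖φ k‖ + ‖φ (k - 1)‖) * ‖φ k - φ (k - 1)‖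

namespace HasQuadraticIncrements

variable {φ : ℕ → E} {c M B ε : ℝ}

theorem norm_sub_le_mul (hφ : HasQuadraticIncrements c φ) (hc : 0 ≤ c) (hcB : 2 * c * B ≤ ε)
    {k : ℕ} (hk : 1 ≤ k) (hφk : ‖φ k‖ ≤ B) (hφk' : ‖φ (k - 1)‖ ≤ B) :
    ‖φ (k + 1) - φ k‖ ≤ ε * ‖φ k - φ (k - 1)‖ := by
  refine (hφ k hk).trans (mul_le_mul_of_nonneg_right ?_ (norm_nonneg _))
  nlinarith [mul_le_mul_of_nonneg_left (add_le_add hφk hφk') hc]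

theorem norm_le_and_norm_sub_le (hφ : HasQuadraticIncrements c φ) (hc : 0 ≤ c) (hε₀ : 0 ≤ ε)
    (hB : ∀ n, M + c * M * M * ∑ j ∈ range n, ε ^ j ≤ B) (hcB : 2 * c * B ≤ ε)
    (h0 : φ 0 = 0) (h1 : ‖φ 1‖ ≤ M) (m : ℕ) :
    ‖φ (m + 1)‖ ≤ M + c * M * M * ∑ j ∈ range m, ε ^ j ∧
      ‖φ (m + 2) - φ (m + 1)‖ ≤ c * M * M * ε ^ m := by
  induction m with
  | zero =>
    refine ⟨by simpa using h1, ?_⟩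
    have h := hφ 1 le_rfl
    simp only [h0, norm_zero, add_zero, sub_zero, Nat.sub_self] at h
    have hM : ‖φ 1‖ * ‖φ 1‖ ≤ M * M := mul_self_le_mul_self (norm_nonneg _) h1
    nlinarith
  | succ m ih =>
    obtain ⟨ih_norm, ih_sub⟩ := ih
    have h_norm : ‖φ (m + 2)‖ ≤ M + c * M * M * ∑ j ∈ range (m + 1), ε ^ j := by
      rw [sum_range_succ]
      have := norm_le_insert' (φ (m + 2)) (φ (m + 1))
      linarith
    refine ⟨h_norm, ?_⟩
    calc ‖φ (m + 2 + 1) - φ (m + 2)‖ ≤ ε * ‖φ (m + 2) - φ (m + 1)‖ :=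
          hφ.norm_sub_le_mul hc hcB (by omega) (h_norm.trans (hB _)) (ih_norm.trans (hB _))
      _ ≤ ε * (c * M * M * ε ^ m) := mul_le_mul_of_nonneg_left ih_sub hε₀
      _ = c * M * M * ε ^ (m + 1) := by ring

theorem norm_le (hφ : HasQuadraticIncrements c φ) (hc : 0 ≤ c) (hε₀ : 0 ≤ ε) (hε₁ : ε < 1)
    (hcB : 2 * c * (M + c * M * M / (1 - ε)) ≤ ε) (h0 : φ 0 = 0) (h1 : ‖φ 1‖ ≤ M) (n : ℕ) :
    ‖φ n‖ ≤ M + c * M * M / (1 - ε) := by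
  have hM : 0 ≤ M := (norm_nonneg _).trans h1
  have hB : ∀ n, M + c * M * M * ∑ j ∈ range n, ε ^ j ≤ M + c * M * M / (1 - ε) := by
    intro n
    have := geom_sum_Ico_le_of_lt_one (m := 0) (n := n) hε₀ hε₁
    rw [Nat.Ico_zero_eq_range, pow_zero] at this
    rw [div_eq_mul_one_div]
    gcongr
  cases n with
  | zero => rw [h0, norm_zero]; exact hM.trans (by simpa using hB 0)
  | succ n => exact (hφ.norm_le_and_norm_sub_le hc hε₀ hB hcB h0 h1 n).1.trans (hB n)

end HasQuadraticIncrements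

end QuadraticIncrements

theorem cauchySeq_of_dist_succ_le_mul {α : Type*} [PseudoMetricSpace α] {u : ℕ → α} {r : ℝ}
    (hr₀ : 0 ≤ r) (hr₁ : r < 1) (h : ∀ n, dist (u (n + 1)) (u (n + 2)) ≤ r * dist (u n) (u (n + 1))) :
    CauchySeq u := by
  refine cauchySeq_of_le_geometric r (dist (u 0) (u 1)) hr₁ fun n ↦ ?_
  induction n with
  | zero => simp
  | succ n ih =>
    calc dist (u (n + 1)) (u (n + 2)) ≤ r * dist (u n) (u (n + 1)) := h n
      _ ≤ r * (dist (u 0) (u 1) * r ^ n) := mul_le_mul_of_nonneg_left ih hr₀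
      _ = dist (u 0) (u 1) * r ^ (n + 1) := by ring

theorem iteration_bounds_and_contraction_general
    {X : Type*} [NormedAddCommGroup X]
    (C₁ C₂ C₃ a ε : ℝ) (hC₁ : 0 < C₁) (hC₂ : 0 < C₂)
    (hε : ε ∈ Set.Ioo (0:ℝ) 1)
    (hsmall : 2 * a * (C₁ * C₂ * C₃) * (1 + a * (C₁ * C₂ * C₃) / (1 - ε)) ≤ ε)
    (φ : ℕ → X) (h0 : φ 0 = 0) (h1 : ‖φ 1‖ ≤ a * C₃)
    (hrec : ∀ k ≥ 1, ‖φ (k + 1) - φ k‖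
      ≤ C₁ * C₂ * (‖φ k‖ + ‖φ (k - 1)‖) * ‖φ k - φ (k - 1)‖) :
    (∀ n ≥ 1, ‖φ n‖ ≤ a * C₃ * (1 + a * (C₁ * C₂ * C₃) / (1 - ε)))
    ∧ (∀ k ≥ 1, ‖φ (k + 1) - φ k‖ ≤ ε * ‖φ k - φ (k - 1)‖)
    ∧ CauchySeq φ := by
  obtain ⟨hε₀, hε₁⟩ := hε
  have hφ : HasQuadraticIncrements (C₁ * C₂) φ := hrec
  have hc : 0 ≤ C₁ * C₂ := by positivity
  have hB_eq : a * C₃ * (1 + a * (C₁ * C₂ * C₃) / (1 - ε))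
      = a * C₃ + C₁ * C₂ * (a * C₃) * (a * C₃) / (1 - ε) := by ring
  have hcB : 2 * (C₁ * C₂) * (a * C₃ + C₁ * C₂ * (a * C₃) * (a * C₃) / (1 - ε)) ≤ ε := by
    convert hsmall using 1; ring
  have h_norm n := hφ.norm_le hc hε₀.le hε₁ hcB h0 h1 n
  have h_contr : ∀ k ≥ 1, ‖φ (k + 1) - φ k‖ ≤ ε * ‖φ k - φ (k - 1)‖ :=
    fun k hk ↦ hφ.norm_sub_le_mul hc hcB hk (h_norm k) (h_norm (k - 1))
  refine ⟨fun n _ ↦ hB_eq ▸ h_norm n, h_contr, cauchySeq_of_dist_succ_le_mul hε₀.le hε₁ fun n ↦ ?_⟩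
  rw [dist_eq_norm', dist_eq_norm']
  exact h_contr (n + 1) (by omega)

theorem iteration_bounds_and_contraction
    {X : Type*} [NormedAddCommGroup X] [NormedSpace ℝ X]
    (C₁ C₂ C₃ a ε : ℝ) (hC₁ : 0 < C₁) (hC₂ : 0 < C₂) (hC₃ : 0 < C₃)
    (ha : 0 < a) (hε : ε ∈ Set.Ioo (0:ℝ) 1)
    (hsmall : 2 * a * (C₁ * C₂ * C₃) * (1 + a * (C₁ * C₂ * C₃) / (1 - ε)) ≤ ε)
    (φ : ℕ → X) (h0 : φ 0 = 0) (h1 : ‖φ 1‖ ≤ a * C₃)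
    (hrec : ∀ k ≥ 1, ‖φ (k + 1) - φ k‖
      ≤ C₁ * C₂ * (‖φ k‖ + ‖φ (k - 1)‖) * ‖φ k - φ (k - 1)‖) :
    (∀ n ≥ 1, ‖φ n‖ ≤ a * C₃ * (1 + a * (C₁ * C₂ * C₃) / (1 - ε)))
    ∧ (∀ k ≥ 1, ‖φ (k + 1) - φ k‖ ≤ ε * ‖φ k - φ (k - 1)‖)
    ∧ CauchySeq φ :=
  iteration_bounds_and_contraction_general C₁ C₂ C₃ a ε hC₁ hC₂ hε hsmall φ h0 h1 hrec
end

section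
/- Let u ∈ C²([a,b]) solve the Poisson-type equation u'' = F with F continuous. Then for any μ ∈ (0, 1/2), the C¹ norm estimate ‖u‖_{1} ≤ ((1+μ)(b-a)/2)·‖F‖₀ + ((2+μ(b-a))/(μ(b-a)))·‖u‖₀ holds, where ‖u‖₁ = sup|u| + sup|u'| and ‖·‖₀ is the sup norm. -/
/-!
Fix `h = μ (b - a) ∈ (0, b - a)`. Every interior point `x` lies in a subinterval `[y, y + h]`
of `(a, b)`. By the mean value theorem `u'` takes the value `(u (y + h) - u y) / h`, of size at
most `2‖u‖₀ / h`, somewhere on it, and `u'` varies by at most `h ‖F‖₀` across it, so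
`|u' x| ≤ 2‖u‖₀ / h + h ‖F‖₀`. By continuity of the one-sided derivative this bound reaches the
endpoints, and `h ≤ (1 + μ)(b - a) / 2` gives the stated constants.
-/

open Set

/-- Sup norm of `u` over the set `I`. -/
noncomputable def supNorm (I : Set ℝ) (u : ℝ → ℝ) : ℝ :=
  sSup ((fun x => |u x|) '' I)

lemma abs_le_supNorm {I : Set ℝ} {f : ℝ → ℝ} (hI : IsCompact I) (hf : ContinuousOn f I)
    {x : ℝ} (hx : x ∈ I) : |f x| ≤ supNorm I f :=
  le_csSup (hI.image_of_continuousOn hf.abs).bddAbove ⟨x, hx, rfl⟩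

lemma supNorm_le {I : Set ℝ} {f : ℝ → ℝ} {B : ℝ} (hI : I.Nonempty) (h : ∀ x ∈ I, |f x| ≤ B) :
    supNorm I f ≤ B :=
  csSup_le (hI.image _) (by rintro _ ⟨x, hx, rfl⟩; exact h x hx)

lemma exists_Icc_subset_Ioo_length_eq {a b x h : ℝ} (hx : x ∈ Ioo a b) (hh : 0 < h)
    (hhb : h < b - a) : ∃ y, a < y ∧ y ≤ x ∧ x ≤ y + h ∧ y + h < b := by
  have hba : 0 < b - a := hh.trans hhb
  set t := (x - a) / (b - a) with ht
  have hxt : x - a = t * (b - a) := by rw [ht, div_mul_cancel₀ _ hba.ne']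
  have ht₀ : 0 < t := div_pos (sub_pos.2 hx.1) hba
  have ht₁ : t < 1 := (div_lt_one hba).2 (by linarith [hx.2])
  -- `x` divides `[y, y + h]` in the same ratio `t` as it divides `[a, b]`.
  refine ⟨x - h * t, ?_, ?_, ?_, ?_⟩ <;>
    nlinarith [mul_pos ht₀ (sub_pos.2 hhb), mul_pos (sub_pos.2 ht₁) (sub_pos.2 hhb)]

lemma abs_le_of_hasDerivAt_Icc {f f' f'' : ℝ → ℝ} {y z M₀ M₂ : ℝ} (hyz : y < z)
    (hf : ∀ t ∈ Icc y z, HasDerivAt f (f' t) t) (hf' : ∀ t ∈ Icc y z, HasDerivAt f' (f'' t) t)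
    (hy : |f y| ≤ M₀) (hz : |f z| ≤ M₀) (hf'' : ∀ t ∈ Icc y z, |f'' t| ≤ M₂)
    {x : ℝ} (hx : x ∈ Icc y z) : |f' x| ≤ 2 * M₀ / (z - y) + (z - y) * M₂ := by
  have hlen : 0 < z - y := sub_pos.2 hyz
  obtain ⟨ξ, hξ, hslope⟩ := exists_hasDerivAt_eq_slope f f' hyz
    (fun t ht => (hf t ht).continuousAt.continuousWithinAt)
    (fun t ht => hf t (Ioo_subset_Icc_self ht))
  have hξ_le : |f' ξ| ≤ 2 * M₀ / (z - y) := by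
    rw [hslope, abs_div, abs_of_pos hlen]
    gcongr
    linarith [abs_sub (f z) (f y)]
  have hvar : |f' x - f' ξ| ≤ M₂ * |x - ξ| :=
    (convex_Icc y z).norm_image_sub_le_of_norm_hasDerivWithin_le
      (fun t ht => (hf' t ht).hasDerivWithinAt) hf'' (Ioo_subset_Icc_self hξ) hx
  have hdist : |x - ξ| ≤ z - y := abs_sub_le_of_le_of_le hx.1 hx.2 hξ.1.le hξ.2.le
  have hM₂ : 0 ≤ M₂ := (abs_nonneg _).trans (hf'' x hx)
  calc |f' x| ≤ |f' ξ| + |f' x - f' ξ| := by linarith [abs_sub_abs_le_abs_sub (f' x) (f' ξ)]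
    _ ≤ 2 * M₀ / (z - y) + (z - y) * M₂ := by nlinarith

lemma abs_le_of_hasDerivAt_Ioo {f f' f'' : ℝ → ℝ} {a b h M₀ M₂ : ℝ} (hh : 0 < h)
    (hhb : h < b - a) (hf : ∀ t ∈ Ioo a b, HasDerivAt f (f' t) t)
    (hf' : ∀ t ∈ Ioo a b, HasDerivAt f' (f'' t) t) (hf₀ : ∀ t ∈ Ioo a b, |f t| ≤ M₀)
    (hf'' : ∀ t ∈ Ioo a b, |f'' t| ≤ M₂) {x : ℝ} (hx : x ∈ Ioo a b) :
    |f' x| ≤ 2 * M₀ / h + h * M₂ := by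
  obtain ⟨y, hay, hyx, hxz, hzb⟩ := exists_Icc_subset_Ioo_length_eq hx hh hhb
  have hsub : Icc y (y + h) ⊆ Ioo a b := Icc_subset_Ioo hay hzb
  have := abs_le_of_hasDerivAt_Icc (lt_add_of_pos_right y hh)
    (fun t ht => hf t (hsub ht)) (fun t ht => hf' t (hsub ht))
    (hf₀ y (hsub (left_mem_Icc.2 (by linarith)))) (hf₀ _ (hsub (right_mem_Icc.2 (by linarith))))
    (fun t ht => hf'' t (hsub ht)) ⟨hyx, hxz⟩
  rwa [add_sub_cancel_left] at this

lemma abs_deriv_le_of_forall_mem_Ioo {f : ℝ → ℝ} {a b B : ℝ} (hab : a < b)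
    (hf : ContDiffOn ℝ 1 f (Icc a b)) (hB : ∀ x ∈ Ioo a b, |deriv f x| ≤ B) :
    ∀ x ∈ Icc a b, |deriv f x| ≤ B := by
  have hcont : ContinuousOn (fun x => |derivWithin f (Icc a b) x|) (Icc a b) :=
    (hf.continuousOn_derivWithin (uniqueDiffOn_Icc hab) le_rfl).abs
  have hwithin : ∀ x ∈ Icc a b, |derivWithin f (Icc a b) x| ≤ B := by
    intro x hx
    refine ((hcont x hx).mono Ioo_subset_Icc_self).closure_le (by rwa [closure_Ioo hab.ne])
      continuousWithinAt_const fun t ht => ?_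
    rw [derivWithin_of_mem_nhds (Icc_mem_nhds ht.1 ht.2)]
    exact hB t ht
  intro x hx
  by_cases hd : DifferentiableAt ℝ f x
  · rw [← hd.derivWithin (uniqueDiffOn_Icc hab x hx)]
    exact hwithin x hx
  · rw [deriv_zero_of_not_differentiableAt hd, abs_zero]
    exact (abs_nonneg _).trans (hwithin x hx)

theorem poisson_C1_estimate (a b : ℝ) (hab : a < b)
    (F u : ℝ → ℝ) (hF : ContinuousOn F (Set.Icc a b))
    (hu : ContDiffOn ℝ 2 u (Set.Icc a b))
    (heq : ∀ x ∈ Set.Icc a b, deriv (deriv u) x = F x)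
    (μ : ℝ) (hμ : μ ∈ Set.Ioo (0:ℝ) (1/2)) :
    supNorm (Set.Icc a b) u + supNorm (Set.Icc a b) (deriv u)
      ≤ ((1 + μ) * (b - a) / 2) * supNorm (Set.Icc a b) F
        + ((2 + μ * (b - a)) / (μ * (b - a))) * supNorm (Set.Icc a b) u := by
  obtain ⟨hμ₀, hμ₁⟩ := hμ
  set M₀ := supNorm (Icc a b) u
  set M₂ := supNorm (Icc a b) F
  have hh : 0 < μ * (b - a) := mul_pos hμ₀ (sub_pos.2 hab)
  have hu₀ : ∀ x ∈ Icc a b, |u x| ≤ M₀ := fun x => abs_le_supNorm isCompact_Icc hu.continuousOn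
  have hF₀ : ∀ x ∈ Icc a b, |F x| ≤ M₂ := fun x => abs_le_supNorm isCompact_Icc hF
  have hu₂ : ContDiffOn ℝ 2 u (Ioo a b) := hu.mono Ioo_subset_Icc_self
  have hu' : ∀ t ∈ Ioo a b, HasDerivAt u (deriv u t) t := fun t ht =>
    ((hu₂.differentiableOn two_ne_zero).differentiableAt (isOpen_Ioo.mem_nhds ht)).hasDerivAt
  have hu'' : ∀ t ∈ Ioo a b, HasDerivAt (deriv u) (F t) t := fun t ht => by
    rw [← heq t (Ioo_subset_Icc_self ht)]
    have hu₁ : ContDiffOn ℝ 1 (deriv u) (Ioo a b) :=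
      hu₂.deriv_of_isOpen isOpen_Ioo (by norm_num)
    exact ((hu₁.differentiableOn one_ne_zero).differentiableAt (isOpen_Ioo.mem_nhds ht)).hasDerivAt
  have hderiv : supNorm (Icc a b) (deriv u) ≤ 2 * M₀ / (μ * (b - a)) + μ * (b - a) * M₂ :=
    supNorm_le (nonempty_Icc.2 hab.le) <| abs_deriv_le_of_forall_mem_Ioo hab (hu.of_le one_le_two)
      fun x => abs_le_of_hasDerivAt_Ioo hh (by nlinarith) hu' hu''
        (fun t ht => hu₀ t (Ioo_subset_Icc_self ht)) (fun t ht => hF₀ t (Ioo_subset_Icc_self ht))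
  have hM₂ : 0 ≤ M₂ := (abs_nonneg _).trans (hF₀ a (left_mem_Icc.2 hab.le))
  have hμF : μ * (b - a) * M₂ ≤ (1 + μ) * (b - a) / 2 * M₂ := by gcongr; nlinarith
  have hcoeff : (2 + μ * (b - a)) / (μ * (b - a)) * M₀ = M₀ + 2 * M₀ / (μ * (b - a)) := by
    rw [add_div, div_self hh.ne']; ring
  linarith
end
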